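/- arXiv:1507.01524 — 2 statements merged into one kernel-verified Lean document; each statement's English description precedes it below -/
import Mathlib

section
/- Let P be a PAG over a finite node set V and let X, Y be disjoint nonempty subsets of V. If P is adjustment amenable relative to (X,Y), i.e., every proper possibly directed path from X to Y in P starts with a visible edge out of X, then every MAG M ∈ [P] satisfies condition (0*) of the adjustment criterion relative to (X,Y): every proper directed path from X to Y in M starts with a visible edge out of X. -/
open scoped Classical

/-- Edge marks: tail, arrowhead, circle. -/
inductive Mark : Type
  | tail
  | arrow
  | circle
  deriving DecidableEq

/-- A partial mixed graph over a node set `V`: any two distinct nodes are joined by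
at most one edge; `mark a b` is the mark at `b` on the edge between `a` and `b`
(`none` if there is no edge). -/
structure PMG (V : Type) where
  mark : V → V → Option Mark
  symm : ∀ a b, (mark a b).isSome ↔ (mark b a).isSome
  irrefl : ∀ a, mark a a = none

namespace PMG

variable {V : Type}

/-- `a` and `b` are adjacent. -/
def Adj (G : PMG V) (a b : V) : Prop := (G.mark a b).isSome

/-- directed edge `a → b`. -/
def DirEdge (G : PMG V) (a b : V) : Prop :=
  G.mark a b = some Mark.arrow ∧ G.mark b a = some Mark.tail

/-- bidirected edge `a ↔ b`. -/
def BidirEdge (G : PMG V) (a b : V) : Prop :=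
  G.mark a b = some Mark.arrow ∧ G.mark b a = some Mark.arrow

/-- non-directed edge `a o-o b`. -/
def NondirEdge (G : PMG V) (a b : V) : Prop :=
  G.mark a b = some Mark.circle ∧ G.mark b a = some Mark.circle

/-- A path: a nonempty list of distinct nodes in which successive nodes are adjacent. -/
def IsPath (G : PMG V) (p : List V) : Prop :=
  p ≠ [] ∧ p.Nodup ∧ p.Chain' G.Adj

/-- A path from `a` to `b` (with at least one edge). -/
def IsPathFromTo (G : PMG V) (p : List V) (a b : V) : Prop :=
  IsPath G p ∧ p.head? = some a ∧ p.getLast? = some b ∧ 2 ≤ p.length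

/-- All edges on `p` are directed towards the end of `p`. -/
def DirectedAlong (G : PMG V) (p : List V) : Prop :=
  ∀ i a b, p[i]? = some a → p[i+1]? = some b → G.DirEdge a b

/-- No edge on `p` has an arrowhead at its endpoint closer to the start of `p`
(`p` is possibly directed). -/
def PossDirAlong (G : PMG V) (p : List V) : Prop :=
  ∀ i a b, p[i]? = some a → p[i+1]? = some b → G.mark b a ≠ some Mark.arrow

/-- `b` is a descendant of `a`: a directed path (possibly of length 0) from `a` to `b`. -/
def Descendant (G : PMG V) (a b : V) : Prop :=
  ∃ p, IsPath G p ∧ DirectedAlong G p ∧ p.head? = some a ∧ p.getLast? = some b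

/-- `b` is a possible descendant of `a`. -/
def PossDescendant (G : PMG V) (a b : V) : Prop :=
  ∃ p, IsPath G p ∧ PossDirAlong G p ∧ p.head? = some a ∧ p.getLast? = some b

/-- The node at position `i+1` of `p` is a collider on `p`. -/
def ColliderAt (G : PMG V) (p : List V) (i : ℕ) : Prop :=
  ∃ a b c, p[i]? = some a ∧ p[i+1]? = some b ∧ p[i+2]? = some c ∧
    G.mark a b = some Mark.arrow ∧ G.mark c b = some Mark.arrow

/-- The node at position `i+1` of `p` is a definite non-collider on `p`. -/
def DefNonColliderAt (G : PMG V) (p : List V) (i : ℕ) : Prop :=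
  ∃ a b c, p[i]? = some a ∧ p[i+1]? = some b ∧ p[i+2]? = some c ∧
    (G.mark a b = some Mark.tail ∨ G.mark c b = some Mark.tail ∨
      (G.mark a b = some Mark.circle ∧ G.mark c b = some Mark.circle ∧ ¬ G.Adj a c))

/-- `p` is of definite status. -/
def DefStatus (G : PMG V) (p : List V) : Prop :=
  ∀ i, i + 2 < p.length → (ColliderAt G p i ∨ DefNonColliderAt G p i)

/-- `p` is a definite status path that is m-connecting given `Z`. -/
def MConn (G : PMG V) (Z : Finset V) (p : List V) : Prop :=
  DefStatus G p ∧
  (∀ i b, p[i+1]? = some b → DefNonColliderAt G p i → b ∉ Z) ∧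
  (∀ i b, p[i+1]? = some b → ColliderAt G p i → ∃ z ∈ Z, Descendant G b z)

/-- `a` and `b` are m-separated given `Z`: every definite status path between them
is blocked by `Z`. -/
def MSep (G : PMG V) (a b : V) (Z : Finset V) : Prop :=
  ∀ p, IsPathFromTo G p a b → ¬ MConn G Z p

/-- Two graphs have the same m-separation relations. -/
def MarkovEquiv (G H : PMG V) : Prop :=
  ∀ a b (Z : Finset V), a ≠ b → a ∉ Z → b ∉ Z → (MSep G a b Z ↔ MSep H a b Z)

/-- `G` is a DAG: all edges directed and no directed cycle. -/
def IsDAG (G : PMG V) : Prop :=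
  (∀ a b, G.Adj a b → G.DirEdge a b ∨ G.DirEdge b a) ∧
  (∀ a b, Descendant G a b → Descendant G b a → a = b)

/-- A mixed graph: edges only `→` or `↔`. -/
def IsMixed (G : PMG V) : Prop :=
  ∀ a b, G.Adj a b → G.DirEdge a b ∨ G.DirEdge b a ∨ G.BidirEdge a b

/-- Ancestral mixed graph: no directed cycle, no almost directed cycle. -/
def IsAncestral (G : PMG V) : Prop :=
  IsMixed G ∧ (∀ a b, Descendant G a b → Descendant G b a → a = b) ∧
  (∀ a b, Descendant G a b → ¬ G.BidirEdge b a)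

/-- Maximal ancestral graph. -/
def IsMAG (G : PMG V) : Prop :=
  IsAncestral G ∧ ∀ a b : V, a ≠ b → ¬ G.Adj a b →
    ∃ Z : Finset V, a ∉ Z ∧ b ∉ Z ∧ MSep G a b Z

/-- A collider path from `v` to `x` that is into `x` and all of whose
non-endpoint nodes are parents of `y`. -/
def ColliderPathInto (G : PMG V) (v x y : V) : Prop :=
  ∃ p : List V, IsPathFromTo G p v x ∧
    (∀ i, i + 2 < p.length → ColliderAt G p i) ∧
    (∃ a, p[p.length - 2]? = some a ∧ G.mark a x = some Mark.arrow) ∧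
    (∀ c ∈ p, c ≠ v → c ≠ x → G.DirEdge c y)

/-- The directed edge `x → y` is visible (in a MAG or PAG). -/
def Visible (G : PMG V) (x y : V) : Prop :=
  G.DirEdge x y ∧
  ∃ v, v ≠ y ∧ ¬ G.Adj v y ∧
    (G.mark v x = some Mark.arrow ∨ ColliderPathInto G v x y)

/-- `p` is a proper path from the node set `X` to the node set `Y`. -/
def ProperPath (G : PMG V) (X Y : Finset V) (p : List V) : Prop :=
  IsPath G p ∧ (∃ a ∈ X, p.head? = some a) ∧ (∃ b ∈ Y, p.getLast? = some b) ∧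
  (∀ c ∈ p.tail, c ∉ X)

/-- `p` starts with an edge satisfying `vis` out of its first node. -/
def StartsVisible (vis : V → V → Prop) (p : List V) : Prop :=
  ∃ a b, p[0]? = some a ∧ p[1]? = some b ∧ vis a b

/-- Adjustment amenability relative to `(X,Y)`, with visibility predicate `vis`. -/
def Amenable (G : PMG V) (vis : V → V → Prop) (X Y : Finset V) : Prop :=
  ∀ p, ProperPath G X Y p → PossDirAlong G p → StartsVisible vis p

/-- Forbidden nodes: possible descendants of a node `w ∉ X` lying on a proper
possibly causal path from `X` to `Y`. -/
def Forb (G : PMG V) (X Y : Finset V) : Set V :=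
  { v | ∃ w, w ∉ X ∧
      (∃ p, ProperPath G X Y p ∧ PossDirAlong G p ∧ w ∈ p) ∧
      PossDescendant G w v }

/-- Forbidden nodes in a DAG or MAG: descendants of a node `w ∉ X` lying on a
proper causal path from `X` to `Y`. -/
def ForbD (G : PMG V) (X Y : Finset V) : Set V :=
  { v | ∃ w, w ∉ X ∧
      (∃ p, ProperPath G X Y p ∧ DirectedAlong G p ∧ w ∈ p) ∧
      Descendant G w v }

/-- The generalized adjustment criterion (GAC) relative to `(X,Y)`, with
visibility predicate `vis`. -/
def GAC (G : PMG V) (vis : V → V → Prop) (X Y Z : Finset V) : Prop :=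
  Amenable G vis X Y ∧
  (∀ z ∈ Z, z ∉ Forb G X Y) ∧
  (∀ p, ProperPath G X Y p → DefStatus G p → ¬ PossDirAlong G p → ¬ MConn G Z p)

/-- The adjustment criterion (AC) for DAGs and MAGs relative to `(X,Y)`, with
visibility predicate `vis`. -/
def AC (H : PMG V) (vis : V → V → Prop) (X Y Z : Finset V) : Prop :=
  (∀ p, ProperPath H X Y p → DirectedAlong H p → StartsVisible vis p) ∧
  (∀ z ∈ Z, z ∉ ForbD H X Y) ∧
  (∀ p, ProperPath H X Y p → ¬ PossDirAlong H p → ¬ MConn H Z p)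

/-- `cls` is the Markov equivalence class of DAGs represented by the CPDAG `G`. -/
def IsCPDAGOf (G : PMG V) (cls : Set (PMG V)) : Prop :=
  cls.Nonempty ∧
  (∀ D ∈ cls, IsDAG D) ∧
  (∀ D ∈ cls, ∀ D', IsDAG D' → MarkovEquiv D D' → D' ∈ cls) ∧
  (∀ D ∈ cls, ∀ D' ∈ cls, MarkovEquiv D D') ∧
  (∀ D ∈ cls, ∀ a b, G.Adj a b ↔ D.Adj a b) ∧
  (∀ a b, G.Adj a b → (G.DirEdge a b ∨ G.NondirEdge a b)) ∧
  (∀ a b, G.DirEdge a b ↔ (G.Adj a b ∧ ∀ D ∈ cls, D.DirEdge a b))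

/-- `cls` is the Markov equivalence class of MAGs represented by the PAG `P`. -/
def IsPAGOf (P : PMG V) (cls : Set (PMG V)) : Prop :=
  cls.Nonempty ∧
  (∀ M ∈ cls, IsMAG M) ∧
  (∀ M ∈ cls, ∀ M', IsMAG M' → MarkovEquiv M M' → M' ∈ cls) ∧
  (∀ M ∈ cls, ∀ M' ∈ cls, MarkovEquiv M M') ∧
  (∀ M ∈ cls, ∀ a b, P.Adj a b ↔ M.Adj a b) ∧
  (∀ a b, P.mark a b = some Mark.arrow ↔ (P.Adj a b ∧ ∀ M ∈ cls, M.mark a b = some Mark.arrow)) ∧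
  (∀ a b, P.mark a b = some Mark.tail ↔ (P.Adj a b ∧ ∀ M ∈ cls, M.mark a b = some Mark.tail))

section Density

variable {Ω : Type} [Fintype V] [DecidableEq V] [Fintype Ω]

/-- `f` is a probability density (pmf) over the joint state space. -/
def IsDensity (f : (V → Ω) → ℝ) : Prop :=
  (∀ v, 0 ≤ f v) ∧ ∑ v, f v = 1

/-- The marginal density of the variables in `S`, evaluated at `v`. -/
noncomputable def margOn (f : (V → Ω) → ℝ) (S : Finset V) (v : V → Ω) : ℝ :=
  ∑ w : V → Ω, if ∀ i ∈ S, w i = v i then f w else 0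

/-- The conditional density of the variables in `A` given those in `B`, at `v`. -/
noncomputable def condOn (f : (V → Ω) → ℝ) (A B : Finset V) (v : V → Ω) : ℝ :=
  margOn f (A ∪ B) v / margOn f B v

/-- The parents of `i` in `G`. -/
noncomputable def parents (G : PMG V) (i : V) : Finset V :=
  Finset.univ.filter (fun j => G.DirEdge j i)

/-- `f` factorizes according to the DAG `G`. -/
def ConsistentWith (G : PMG V) (f : (V → Ω) → ℝ) : Prop :=
  ∀ v, f v = ∏ i, condOn f {i} (parents G i) v

/-- The post-intervention density `f(· | do(X = xval))` (truncated factorization). -/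
noncomputable def doDens (G : PMG V) (f : (V → Ω) → ℝ) (X : Finset V) (xval : V → Ω) :
    (V → Ω) → ℝ :=
  fun v => if ∀ i ∈ X, v i = xval i then ∏ i ∈ Xᶜ, condOn f {i} (parents G i) v else 0

/-- Overwrite `v` on `Z` by the assignment `w`. -/
noncomputable def patch (Z : Finset V) (v : V → Ω) (w : {i // i ∈ Z} → Ω) : V → Ω :=
  fun i => if h : i ∈ Z then w ⟨i, h⟩ else v i

end Density

/-- `Z` is an adjustment set relative to `(X,Y)` in the DAG `D`: for every finite state
space and every density consistent with `D`, the adjustment formula holds. -/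
def IsAdjSetDAG [Fintype V] [DecidableEq V] (D : PMG V) (X Y Z : Finset V) : Prop :=
  ∀ (Ω : Type) [Fintype Ω] [DecidableEq Ω] (f : (V → Ω) → ℝ),
    IsDensity f → ConsistentWith D f →
    ∀ v : V → Ω,
      margOn (doDens D f X v) Y v =
        if Z = ∅ then condOn f Y X v
        else ∑ w : ({i // i ∈ Z} → Ω),
          condOn f Y (X ∪ Z) (patch Z v w) * margOn f Z (patch Z v w)

/-- The marginal of a density over `V ⊕ L` on the observed variables `V`. -/
noncomputable def obsMargin {L : Type} [Fintype V] [Fintype L] [DecidableEq V] [DecidableEq L]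
    {Ω : Type} [Fintype Ω] (f : ((V ⊕ L) → Ω) → ℝ) : (V → Ω) → ℝ :=
  fun v => ∑ w : (V ⊕ L) → Ω, if ∀ i : V, w (Sum.inl i) = v i then f w else 0

/-- `M` is the MAG over the observed variables `V` of the DAG `D'` over `V ⊕ L`. -/
def IsMAGOverObs {L : Type} (D' : PMG (V ⊕ L)) (M : PMG V) : Prop :=
  (∀ a b : V, M.Adj a b ↔ (a ≠ b ∧ ∀ S : Finset V, a ∉ S → b ∉ S →
      ¬ MSep D' (Sum.inl a) (Sum.inl b) (S.image Sum.inl))) ∧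
  (∀ a b : V, M.Adj a b →
    ((M.mark a b = some Mark.arrow ↔ ¬ Descendant D' (Sum.inl b) (Sum.inl a)) ∧
     (M.mark a b = some Mark.tail ↔ Descendant D' (Sum.inl b) (Sum.inl a))))

/-- `Z` is an adjustment set relative to `(X,Y)` in the MAG `M`: for every DAG `D'`
with latent variables whose MAG over `V` is `M` and every consistent density,
the adjustment formula holds for the observed margin. -/
def IsAdjSetMAG [Fintype V] [DecidableEq V] (M : PMG V) (X Y Z : Finset V) : Prop :=
  ∀ (Ω L : Type) [Fintype Ω] [DecidableEq Ω] [Fintype L] [DecidableEq L]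
    (D' : PMG (V ⊕ L)) (f' : ((V ⊕ L) → Ω) → ℝ),
    IsDAG D' → IsMAGOverObs D' M → IsDensity f' → ConsistentWith D' f' →
    ∀ v : (V ⊕ L) → Ω,
      margOn (obsMargin (doDens D' f' (X.image Sum.inl) v)) Y (fun i => v (Sum.inl i)) =
        if Z = ∅ then condOn (obsMargin f') Y X (fun i => v (Sum.inl i))
        else ∑ w : ({i // i ∈ Z} → Ω),
          condOn (obsMargin f') Y (X ∪ Z) (patch Z (fun i => v (Sum.inl i)) w) *
            margOn (obsMargin f') Z (patch Z (fun i => v (Sum.inl i)) w)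

/-- The distance-from-`Z` of a node `q`: the length of a shortest directed path
(possibly of length 0) from `q` to a member of `Z`. -/
noncomputable def distZ (G : PMG V) (Z : Finset V) (q : V) : ℕ :=
  sInf { n | ∃ p, IsPath G p ∧ DirectedAlong G p ∧ p.head? = some q ∧
      (∃ z ∈ Z, p.getLast? = some z) ∧ p.length = n + 1 }

/-- The distance-from-`Z` of a path `p`: the sum of the distances-from-`Z`
of the colliders on `p`. -/
noncomputable def pathDistZ (G : PMG V) (Z : Finset V) (p : List V) : ℕ :=
  ∑ i ∈ Finset.range p.length,
    if ColliderAt G p i then (p[i+1]?.elim 0 (distZ G Z)) else 0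

end PMG

open PMG in
/-- If a PAG is adjustment amenable relative to `(X,Y)`, then every MAG in its
equivalence class satisfies condition (0*) of the adjustment criterion. -/
theorem amenable_pag_forces_amenable_mags {V : Type} [Fintype V] [DecidableEq V]
    (P : PMG V) (cls : Set (PMG V)) (hP : IsPAGOf P cls) (X Y : Finset V)
    (hXY : Disjoint X Y) (hX : X.Nonempty) (hY : Y.Nonempty)
    (hAm : Amenable P (Visible P) X Y) :
    ∀ M ∈ cls, ∀ p, ProperPath M X Y p → DirectedAlong M p →
      StartsVisible (Visible M) p := by
  obtain ⟨hne, hMAG, hcl, heq, hAdj, hArr, hTail⟩ := hP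
  intro M hM p hprop hdir
  -- basic mark-transfer facts from P to M
  have adjI : ∀ a b, P.Adj a b ↔ M.Adj a b := hAdj M hM
  have arrT : ∀ a b, P.mark a b = some Mark.arrow → M.mark a b = some Mark.arrow :=
    fun a b h => ((hArr a b).1 h).2 M hM
  have tailT : ∀ a b, P.mark a b = some Mark.tail → M.mark a b = some Mark.tail :=
    fun a b h => ((hTail a b).1 h).2 M hM
  have dirT : ∀ a b, P.DirEdge a b → M.DirEdge a b :=
    fun a b h => ⟨arrT a b h.1, tailT b a h.2⟩
  -- p is a proper path in P
  obtain ⟨⟨hpne, hnd, hch⟩, hhd, hlast, htl⟩ := hprop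
  have hpathP : IsPath P p :=
    ⟨hpne, hnd, hch.imp (fun {x y} h => (adjI x y).2 h)⟩
  have hproperP : ProperPath P X Y p := ⟨hpathP, hhd, hlast, htl⟩
  -- p is possibly directed in P
  have hposs : PossDirAlong P p := by
    intro i a b ha hb hc
    have hd := hdir i a b ha hb
    have := arrT b a hc
    rw [hd.2] at this
    exact Mark.noConfusion (Option.some.injEq _ _ ▸ this)
  obtain ⟨a, b, h0, h1, hvis⟩ := hAm p hproperP hposs
  refine ⟨a, b, h0, h1, ?_⟩
  -- transfer visibility from P to M
  obtain ⟨hde, v, hvy, hvadj, hcase⟩ := hvis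
  refine ⟨dirT a b hde, v, hvy, fun h => hvadj ((adjI v b).2 h), ?_⟩
  rcases hcase with h | ⟨q, ⟨⟨hq1, hq2, hq3⟩, hqh, hql, hqlen⟩, hcol, ⟨w, hw1, hw2⟩, hpar⟩
  · exact Or.inl (arrT v a h)
  · refine Or.inr ⟨q, ⟨⟨hq1, hq2, hq3.imp (fun {x y} h => (adjI x y).1 h)⟩, hqh, hql, hqlen⟩,
      ?_, ⟨w, hw1, arrT w a hw2⟩, fun c hc h1 h2 => dirT c b (hpar c hc h1 h2)⟩
    intro i hi
    obtain ⟨x, y, z, hx, hy, hz, hxy, hzy⟩ := hcol i hi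
    exact ⟨x, y, z, hx, hy, hz, arrT x y hxy, arrT z y hzy⟩
end

section
/- Let X and Y be disjoint nonempty node sets. If G is a CPDAG and D ∈ [G] is a DAG, then Forb(X,Y,D) ⊆ Forb(X,Y,G): every node that is a descendant in D of some node W ∉ X lying on a proper causal path from X to Y in D is a possible descendant in G of some node W' ∉ X lying on a proper possibly causal path from X to Y in G. Likewise, if P is a PAG and M ∈ [P] is a MAG, then Forb(X,Y,M) ⊆ Forb(X,Y,P). -/
open scoped Classical

open PMG in
/-- Key lemma: if `G` has the same adjacencies as `D` and every directed edge of `D`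
has no arrowhead at its source in `G`, then `ForbD D ⊆ Forb G`. -/
lemma forb_key {V : Type} (G D : PMG V)
    (hadj : ∀ a b, G.Adj a b ↔ D.Adj a b)
    (hdir : ∀ a b, D.DirEdge a b → G.mark b a ≠ some Mark.arrow)
    (X Y : Finset V) : ForbD D X Y ⊆ Forb G X Y := by
  rintro v ⟨w, hwX, ⟨p, ⟨⟨hpne, hpnd, hpch⟩, hhead, hlast, htail⟩, hpd, hwp⟩,
    q, ⟨hqne, hqnd, hqch⟩, hqd, hqh, hql⟩
  exact ⟨w, hwX,
    ⟨p, ⟨⟨hpne, hpnd, hpch.imp fun {a b} h => (hadj a b).mpr h⟩, hhead, hlast, htail⟩,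
      fun i a b ha hb => hdir a b (hpd i a b ha hb), hwp⟩,
    q, ⟨hqne, hqnd, hqch.imp fun {a b} h => (hadj a b).mpr h⟩,
    fun i a b ha hb => hdir a b (hqd i a b ha hb), hqh, hql⟩

open PMG in
/-- The forbidden set of any DAG (MAG) in the equivalence class of a CPDAG (PAG)
is contained in the forbidden set of the CPDAG (PAG). -/
theorem forb_subset_forb {V : Type} [Fintype V] [DecidableEq V]
    (X Y : Finset V) (hXY : Disjoint X Y) (hX : X.Nonempty) (hY : Y.Nonempty) :
    (∀ (G : PMG V) (cls : Set (PMG V)), IsCPDAGOf G cls →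
      ∀ D ∈ cls, ForbD D X Y ⊆ Forb G X Y) ∧
    (∀ (P : PMG V) (cls : Set (PMG V)), IsPAGOf P cls →
      ∀ M ∈ cls, ForbD M X Y ⊆ Forb P X Y) := by
  constructor
  · rintro G cls ⟨-, -, -, -, hadj, hedge, hdiriff⟩ D hD
    refine forb_key G D (hadj D hD) ?_ X Y
    intro a b hab hGba
    have hGadj : G.Adj b a := by simp [PMG.Adj, hGba]
    rcases hedge b a hGadj with h | h
    · have := (((hdiriff b a).mp h).2 D hD).1
      rw [hab.2] at this
      exact Mark.noConfusion (Option.some.inj this)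
    · rw [h.1] at hGba
      exact Mark.noConfusion (Option.some.inj hGba)
  · rintro P cls ⟨-, -, -, -, hadj, harrow, -⟩ M hM
    refine forb_key P M (hadj M hM) ?_ X Y
    intro a b hab hPba
    have := ((harrow b a).mp hPba).2 M hM
    rw [hab.2] at this
    exact Mark.noConfusion (Option.some.inj this)
end
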